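/- Soundness of the early-termination in Algorithm 1: let C = L ∨ C' and D = N₁ ∨ … ∨ Nₙ ∨ D' be equality-free clauses, let N' ⊆ N ⊆ {N₁,…,Nₙ}, let σ' be an mgu of L with the complements of N' and σ a unifier of L with the complements of N. If the L-resolvent C'σ' ∨ (D \ N')σ' contains a complementary pair of literals neither of which is an instance under σ' of a literal in N, then the L-resolvent C'σ ∨ (D \ N)σ also contains a complementary pair of literals (i.e., is valid). -/

import Mathlib

/-- First-order terms over variables `V` and function symbols `Fn`. -/
inductive Term (V Fn : Type) : Type
  | var : V → Term V Fn
  | app : Fn → List (Term V Fn) → Term V Fn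

/-- A substitution maps variables to terms. -/
abbrev Subst (V Fn : Type) := V → Term V Fn

/-- Applying a substitution to a term. -/
def Term.subst {V Fn : Type} (σ : Subst V Fn) : Term V Fn → Term V Fn
  | .var v => σ v
  | .app f ts => .app f (ts.attach.map (fun t => Term.subst σ t.1))
  decreasing_by have := List.sizeOf_lt_of_mem t.2; simp at *; omega

/-- The set of variables occurring in a term. -/
def Term.vars {V Fn : Type} : Term V Fn → Set V
  | .var v => {v}
  | .app _ ts => {x | ∃ t ∈ ts.attach, x ∈ Term.vars t.1}
  decreasing_by have := List.sizeOf_lt_of_mem t.2; simp at *; omega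

/-- A term is ground if it contains no variables. -/
def Term.IsGround {V Fn : Type} (t : Term V Fn) : Prop := t.vars = ∅

/-- Composition of substitutions: `σ.comp γ` is "first σ, then γ". -/
def Subst.comp {V Fn : Type} (σ γ : Subst V Fn) : Subst V Fn :=
  fun v => (σ v).subst γ

/-- An atom: a predicate symbol applied to a list of argument terms. -/
structure Atom (V Fn P : Type) where
  pred : P
  args : List (Term V Fn)

/-- A literal: an atom with a polarity (`true` = positive). -/
structure Lit (V Fn P : Type) where
  pol : Bool
  atom : Atom V Fn P

/-- The complement of a literal. -/
def Lit.compl {V Fn P : Type} (l : Lit V Fn P) : Lit V Fn P := ⟨!l.pol, l.atom⟩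

def Atom.subst {V Fn P : Type} (σ : Subst V Fn) (A : Atom V Fn P) : Atom V Fn P :=
  ⟨A.pred, A.args.map (Term.subst σ)⟩

def Lit.subst {V Fn P : Type} (σ : Subst V Fn) (l : Lit V Fn P) : Lit V Fn P :=
  ⟨l.pol, l.atom.subst σ⟩

/-- A clause is a multiset (disjunction) of literals. -/
abbrev Clause (V Fn P : Type) := Multiset (Lit V Fn P)

def Clause.subst {V Fn P : Type} (σ : Subst V Fn) (C : Clause V Fn P) : Clause V Fn P :=
  C.map (Lit.subst σ)

def Atom.vars {V Fn P : Type} (A : Atom V Fn P) : Set V := {x | ∃ t ∈ A.args, x ∈ t.vars}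
def Lit.vars {V Fn P : Type} (l : Lit V Fn P) : Set V := l.atom.vars
def Clause.vars {V Fn P : Type} (C : Clause V Fn P) : Set V := {x | ∃ l ∈ C, x ∈ l.vars}

/-- A clause is ground if it contains no variables. -/
def Clause.IsGround {V Fn P : Type} (C : Clause V Fn P) : Prop := C.vars = ∅

/-- A substitution `σ` unifies a list of literals if it maps them all to the same literal. -/
def IsUnifier {V Fn P : Type} (σ : Subst V Fn) (ls : List (Lit V Fn P)) : Prop :=
  ∀ l₁ ∈ ls, ∀ l₂ ∈ ls, l₁.subst σ = l₂.subst σ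

/-- A most general unifier: every unifier factors through it. -/
def IsMGU {V Fn P : Type} (σ : Subst V Fn) (ls : List (Lit V Fn P)) : Prop :=
  IsUnifier σ ls ∧ ∀ τ, IsUnifier τ ls → ∃ γ, σ.comp γ = τ

/-- Validity of an equality-free clause: it contains a complementary pair of literals. -/
def Clause.ValidEF {V Fn P : Type} (C : Clause V Fn P) : Prop :=
  ∃ A : Atom V Fn P, (⟨true, A⟩ : Lit V Fn P) ∈ C ∧ (⟨false, A⟩ : Lit V Fn P) ∈ C

/-- `C` (written as `L ∨ C'`) is blocked by `L` in `F`: all `L`-resolvents with clauses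
of `F \ {L ∨ C'}` are valid. -/
def BlockedEF {V Fn P : Type} (L : Lit V Fn P) (C' : Clause V Fn P)
    (F : Set (Clause V Fn P)) : Prop :=
  ∀ D ∈ F, D ≠ L ::ₘ C' → ∀ Ns Drest : Clause V Fn P, Ns + Drest = D → Ns ≠ 0 →
    ∀ σ : Subst V Fn, IsMGU σ (L :: (Ns.map Lit.compl).toList) →
      Clause.ValidEF (C'.subst σ + Drest.subst σ)

/-- A propositional assignment on (ground) atoms. -/
abbrev PAssign (V Fn P : Type) := Atom V Fn P → Bool

def litTrue {V Fn P : Type} (α : PAssign V Fn P) (l : Lit V Fn P) : Prop :=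
  α l.atom = l.pol

/-- Propositional satisfaction of a (ground) clause. -/
def satC {V Fn P : Type} (α : PAssign V Fn P) (C : Clause V Fn P) : Prop :=
  ∃ l ∈ C, litTrue α l

/-- A first-order interpretation. -/
structure Interp (Fn P : Type) : Type 1 where
  dom : Type
  nonempty : Nonempty dom
  fn : Fn → List dom → dom
  pr : P → List dom → Prop

def Term.eval {V Fn P : Type} (I : Interp Fn P) (ρ : V → I.dom) : Term V Fn → I.dom
  | .var v => ρ v
  | .app f ts => I.fn f (ts.attach.map (fun t => Term.eval I ρ t.1))
  decreasing_by have := List.sizeOf_lt_of_mem t.2; simp at *; omega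

def litHolds {V Fn P : Type} (I : Interp Fn P) (ρ : V → I.dom) (l : Lit V Fn P) : Prop :=
  l.pol = true ↔ I.pr l.atom.pred (l.atom.args.map (Term.eval I ρ))

def clauseHolds {V Fn P : Type} (I : Interp Fn P) (ρ : V → I.dom) (C : Clause V Fn P) : Prop :=
  ∃ l ∈ C, litHolds I ρ l

/-- First-order satisfiability of a CNF formula (clauses implicitly universally quantified). -/
def SatEF {V Fn P : Type} (F : Set (Clause V Fn P)) : Prop :=
  ∃ I : Interp Fn P, ∀ C ∈ F, ∀ ρ : V → I.dom, clauseHolds I ρ C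

/-
The mgu `σ'` of `L` with the complements of `N'` is more general than `σ`, which unifies a superset
of those literals; so `σ = σ' γ` for some `γ`, and applying `γ` to the complementary pair found
in the `σ'`-resolvent gives a complementary pair under `σ`. Neither literal of the pair is
an instance of a literal of `N`, so both come from `C'` or from `D \ N`, and the pair lies in the
`σ`-resolvent.
-/

namespace Term

variable {V Fn : Type}

theorem subst_app (σ : Subst V Fn) (f : Fn) (ts : List (Term V Fn)) :
    (app f ts).subst σ = app f (ts.map (Term.subst σ)) := by
  rw [Term.subst, List.attach_map_val]

theorem subst_subst (σ γ : Subst V Fn) :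
    ∀ t : Term V Fn, (t.subst σ).subst γ = t.subst (σ.comp γ)
  | .var _ => by rw [Term.subst, Term.subst]; rfl
  | .app f ts => by
      rw [subst_app, subst_app, subst_app, List.map_map]
      congr 1
      exact List.map_congr_left fun t _ => subst_subst σ γ t

end Term

namespace Lit

variable {V Fn P : Type}

theorem subst_subst (σ γ : Subst V Fn) (l : Lit V Fn P) :
    (l.subst σ).subst γ = l.subst (σ.comp γ) := by
  simp [Lit.subst, Atom.subst, Term.subst_subst]

theorem subst_compl (σ : Subst V Fn) (l : Lit V Fn P) : l.compl.subst σ = (l.subst σ).compl :=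
  rfl

theorem subst_eq_compl_subst {σ : Subst V Fn} {l₁ l₂ : Lit V Fn P}
    (h : l₁.subst σ = (l₂.subst σ).compl) (γ : Subst V Fn) :
    l₁.subst (σ.comp γ) = (l₂.subst (σ.comp γ)).compl := by
  rw [← subst_subst, ← subst_subst, h, subst_compl]

end Lit

theorem IsUnifier.mono {V Fn P : Type} {σ : Subst V Fn} {ls ls' : List (Lit V Fn P)} (h : IsUnifier σ ls')
    (hsub : ls ⊆ ls') : IsUnifier σ ls :=
  fun l₁ h₁ l₂ h₂ => h l₁ (hsub h₁) l₂ (hsub h₂)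

namespace Clause

variable {V Fn P : Type}

theorem subst_add (σ : Subst V Fn) (C D : Clause V Fn P) :
    (C + D).subst σ = C.subst σ + D.subst σ :=
  Multiset.map_add _ _ _

theorem subst_mem_subst {σ : Subst V Fn} {C : Clause V Fn P} {l : Lit V Fn P} (h : l ∈ C) :
    l.subst σ ∈ C.subst σ :=
  Multiset.mem_map_of_mem _ h

theorem validEF_of_mem_of_compl_mem {C : Clause V Fn P} {l : Lit V Fn P} (h : l ∈ C)
    (hc : l.compl ∈ C) : C.ValidEF := by
  rcases l with ⟨_ | _, A⟩
  · exact ⟨A, hc, h⟩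
  · exact ⟨A, h, hc⟩

end Clause

theorem Multiset.mem_add_of_mem_add_add_of_notMem {α : Type*} {a : α} {s t u : Multiset α}
    (h : a ∈ s + (t + u)) (ht : a ∉ t) : a ∈ s + u := by
  simp only [Multiset.mem_add] at h ⊢
  tauto

/-- `D = N' + Nrest + Drest`: the resolved sets are `N'` and `N = N' + Nrest`, so
`D \ N' = Nrest + Drest` and `D \ N = Drest`. -/
theorem stmt15_general {V Fn P : Type} (L : Lit V Fn P) (C' N' Nrest Drest : Clause V Fn P)
    (σ' σ : Subst V Fn)
    (hmgu : IsMGU σ' (L :: (N'.map Lit.compl).toList))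
    (hσ : IsUnifier σ (L :: ((N' + Nrest).map Lit.compl).toList))
    (hpair : ∃ M₁ ∈ C' + (Nrest + Drest), ∃ M₂ ∈ C' + (Nrest + Drest),
      M₁.subst σ' = (M₂.subst σ').compl ∧
      (∀ Ni ∈ N' + Nrest, M₁.subst σ' ≠ Ni.subst σ') ∧
      (∀ Ni ∈ N' + Nrest, M₂.subst σ' ≠ Ni.subst σ')) :
    Clause.ValidEF (C'.subst σ + Drest.subst σ) := by
  obtain ⟨M₁, hM₁, M₂, hM₂, hcompl, hM₁N, hM₂N⟩ := hpair
  have hsub : L :: (N'.map Lit.compl).toList ⊆ L :: ((N' + Nrest).map Lit.compl).toList :=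
    List.cons_subset_cons _ fun x hx => by
      simp only [Multiset.mem_toList, Multiset.map_add, Multiset.mem_add] at hx ⊢
      exact Or.inl hx
  obtain ⟨γ, rfl⟩ := hmgu.2 σ (hσ.mono hsub)
  have hresolvent : ∀ M ∈ C' + (Nrest + Drest), (∀ Ni ∈ N' + Nrest, M.subst σ' ≠ Ni.subst σ') →
      M.subst (σ'.comp γ) ∈ C'.subst (σ'.comp γ) + Drest.subst (σ'.comp γ) := by
    intro M hM hMN
    have hMNrest : M ∉ Nrest := fun h => hMN M (Multiset.mem_add.mpr (Or.inr h)) rfl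
    rw [← Clause.subst_add]
    exact Clause.subst_mem_subst (Multiset.mem_add_of_mem_add_add_of_notMem hM hMNrest)
  refine Clause.validEF_of_mem_of_compl_mem (hresolvent M₂ hM₂ hM₂N) ?_
  rw [← Lit.subst_eq_compl_subst hcompl γ]
  exact hresolvent M₁ hM₁ hM₁N

/-- Soundness of the early termination of Algorithm 1: `D = N' + Nrest + Drest`, so that
`N = N' + Nrest` is the larger resolved set and `D \ N' = Nrest + Drest`, `D \ N = Drest`.
If `σ'` is an mgu of `L` with the complements of `N'`, `σ` a unifier of `L` with the
complements of `N`, and the `L`-resolvent over `N'` contains a complementary pair of literals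
neither of which is an instance under `σ'` of a literal of `N`, then the `L`-resolvent over
`N` with unifier `σ` also contains a complementary pair. -/
theorem stmt15 {V Fn P : Type} (L : Lit V Fn P) (C' N' Nrest Drest : Clause V Fn P)
    (σ' σ : Subst V Fn)
    (hN' : N' ≠ 0)
    (hmgu : IsMGU σ' (L :: (N'.map Lit.compl).toList))
    (hσ : IsUnifier σ (L :: ((N' + Nrest).map Lit.compl).toList))
    (hpair : ∃ M₁ ∈ C' + (Nrest + Drest), ∃ M₂ ∈ C' + (Nrest + Drest),
      M₁.subst σ' = (M₂.subst σ').compl ∧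
      (∀ Ni ∈ N' + Nrest, M₁.subst σ' ≠ Ni.subst σ') ∧
      (∀ Ni ∈ N' + Nrest, M₂.subst σ' ≠ Ni.subst σ')) :
    Clause.ValidEF (C'.subst σ + Drest.subst σ) :=
  stmt15_general L C' N' Nrest Drest σ' σ hmgu hσ hpair
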